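/- Let q be a primitive n-th root of unity with n > 1, and suppose f ∈ k[t] satisfies n | j for all j ∈ supp(f). Then w^n is central in B_q(f). -/
import Mathlib


noncomputable section

open FreeAlgebra Polynomial

/-- The defining relations of the algebra `B_q(f)`:
`uv = q·vu`, `wu = q·uw + f(v)`, `wv = q⁻¹·vw + f(u)`,
where `u, v, w` are the generators `ι 0, ι 1, ι 2` of the free algebra. -/
inductive BRel (k : Type*) [Field k] (q : k) (f : Polynomial k) :
    FreeAlgebra k (Fin 3) → FreeAlgebra k (Fin 3) → Prop
  | uv : BRel k q f (ι k 0 * ι k 1) (q • (ι k 1 * ι k 0))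
  | wu : BRel k q f (ι k 2 * ι k 0) (q • (ι k 0 * ι k 2) + aeval (ι k 1) f)
  | wv : BRel k q f (ι k 2 * ι k 1) (q⁻¹ • (ι k 1 * ι k 2) + aeval (ι k 0) f)

/-- The algebra `B_q(f)`. -/
abbrev BAlg (k : Type*) [Field k] (q : k) (f : Polynomial k) := RingQuot (BRel k q f)

def Bu (k : Type*) [Field k] (q : k) (f : Polynomial k) : BAlg k q f :=
  RingQuot.mkAlgHom k (BRel k q f) (ι k 0)
def Bv (k : Type*) [Field k] (q : k) (f : Polynomial k) : BAlg k q f :=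
  RingQuot.mkAlgHom k (BRel k q f) (ι k 1)
def Bw (k : Type*) [Field k] (q : k) (f : Polynomial k) : BAlg k q f :=
  RingQuot.mkAlgHom k (BRel k q f) (ι k 2)

lemma aeval_commute {R A : Type*} [CommSemiring R] [Semiring A] [Algebra R A]
    (p : R[X]) (x y : A) (h : ∀ j ∈ p.support, Commute (x ^ j) y) :
    Commute (aeval x p) y := by
  rw [aeval_def, eval₂_eq_sum, Polynomial.sum_def]
  exact Commute.sum_left _ _ _ fun j hj =>
    (Algebra.commute_algebraMap_left _ _).mul_left (h j hj)

section rels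
variable {k : Type*} [Field k] (q : k) (f : Polynomial k)

lemma ruv : Bu k q f * Bv k q f = q • (Bv k q f * Bu k q f) := by
  have := RingQuot.mkAlgHom_rel k (BRel.uv (k := k) (q := q) (f := f))
  simpa [Bu, Bv, map_mul] using this

lemma rwu : Bw k q f * Bu k q f = q • (Bu k q f * Bw k q f) + aeval (Bv k q f) f := by
  have := RingQuot.mkAlgHom_rel k (BRel.wu (k := k) (q := q) (f := f))
  simpa [Bu, Bv, Bw, map_mul, map_add, aeval_algHom_apply] using this

lemma rwv : Bw k q f * Bv k q f = q⁻¹ • (Bv k q f * Bw k q f) + aeval (Bu k q f) f := by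
  have := RingQuot.mkAlgHom_rel k (BRel.wv (k := k) (q := q) (f := f))
  simpa [Bu, Bv, Bw, map_mul, map_add, aeval_algHom_apply] using this

end rels

/-- for `q` a primitive `n`-th root of unity with `n > 1`, if
`n ∣ j` for all `j ∈ supp(f)`, then `w^n` is central in `B_q(f)`. -/
theorem stmt6 (k : Type*) [Field k] [IsAlgClosed k] [CharZero k]
    (q : k) (hq0 : q ≠ 0) (n : ℕ) (hn : 1 < n) (hq : IsPrimitiveRoot q n)
    (f : Polynomial k) (hf : ∀ j ∈ f.support, n ∣ j) :
    (Bw k q f) ^ n ∈ Set.center (BAlg k q f) := by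
  set U := Bu k q f with hU
  set V := Bv k q f with hV
  set W := Bw k q f with hW
  set Fu := aeval U f with hFu
  set Fv := aeval V f with hFv
  have ruv' : U * V = q • (V * U) := ruv q f
  have rvu : V * U = q⁻¹ • (U * V) := by
    rw [ruv', smul_smul, inv_mul_cancel₀ hq0, one_smul]
  have rwu' : W * U = q • (U * W) + Fv := rwu q f
  have rwv' : W * V = q⁻¹ • (V * W) + Fu := rwv q f
  -- powers of generators past each other
  have u_vpow : ∀ j : ℕ, U * V ^ j = q ^ j • (V ^ j * U) := by
    intro j; induction j with
    | zero => simp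
    | succ j ih =>
      rw [pow_succ, ← mul_assoc, ih, smul_mul_assoc, mul_assoc, ruv']
      simp [smul_smul, mul_smul_comm, mul_assoc, pow_succ, mul_comm]
  have v_upow : ∀ j : ℕ, V * U ^ j = (q⁻¹) ^ j • (U ^ j * V) := by
    intro j; induction j with
    | zero => simp
    | succ j ih =>
      rw [pow_succ, ← mul_assoc, ih, smul_mul_assoc, mul_assoc, rvu]
      simp [smul_smul, mul_smul_comm, mul_assoc, pow_succ, mul_comm]
  have qpow : ∀ j : ℕ, n ∣ j → q ^ j = 1 := by
    rintro j ⟨m, rfl⟩; rw [pow_mul, hq.pow_eq_one, one_pow]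
  have qipow : ∀ j : ℕ, n ∣ j → (q⁻¹) ^ j = 1 := by
    intro j hj; rw [inv_pow, qpow j hj, inv_one]
  have hA : Commute Fv U := by
    refine aeval_commute f V U fun j hj => ?_
    have h := u_vpow j
    rw [qpow j (hf j hj), one_smul] at h
    exact h.symm
  have hB : Commute Fu V := by
    refine aeval_commute f U V fun j hj => ?_
    have h := v_upow j
    rw [qipow j (hf j hj), one_smul] at h
    exact h.symm
  -- w past powers of u and v
  have w_upow : ∀ m : ℕ, W * U ^ (m + 1) =
      q ^ (m + 1) • (U ^ (m + 1) * W) + (∑ i ∈ Finset.range (m + 1), q ^ i) • (U ^ m * Fv) := by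
    intro m; induction m with
    | zero => simpa using rwu'
    | succ m ih =>
      rw [pow_succ, ← mul_assoc, ih, add_mul, smul_mul_assoc, smul_mul_assoc,
        mul_assoc, mul_assoc, rwu', hA.eq, Finset.sum_range_succ]
      rw [mul_add, mul_smul_comm, ← mul_assoc, ← mul_assoc, ← pow_succ, ← pow_succ]
      simp only [Finset.sum_range_succ, add_smul, smul_add, smul_smul, pow_succ]
      module
  have w_vpow : ∀ m : ℕ, W * V ^ (m + 1) =
      (q⁻¹) ^ (m + 1) • (V ^ (m + 1) * W) + (∑ i ∈ Finset.range (m + 1), (q⁻¹) ^ i) • (V ^ m * Fu) := by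
    intro m; induction m with
    | zero => simpa using rwv'
    | succ m ih =>
      rw [pow_succ, ← mul_assoc, ih, add_mul, smul_mul_assoc, smul_mul_assoc,
        mul_assoc, mul_assoc, rwv', hB.eq, Finset.sum_range_succ]
      rw [mul_add, mul_smul_comm, ← mul_assoc, ← mul_assoc, ← pow_succ, ← pow_succ]
      simp only [Finset.sum_range_succ, add_smul, smul_add, smul_smul, pow_succ]
      module
  have hqi : IsPrimitiveRoot q⁻¹ n := hq.inv
  have gs : (∑ i ∈ Finset.range n, q ^ i) = 0 := hq.geom_sum_eq_zero hn
  have gsi : (∑ i ∈ Finset.range n, (q⁻¹) ^ i) = 0 := hqi.geom_sum_eq_zero hn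
  obtain ⟨m, hm⟩ : ∃ m, n = m + 1 := ⟨n - 1, by omega⟩
  have wUn : W * U ^ n = U ^ n * W := by
    have h := w_upow m
    rw [← hm, qpow n dvd_rfl, one_smul, gs, zero_smul, add_zero] at h
    exact h
  have wVn : W * V ^ n = V ^ n * W := by
    have h := w_vpow m
    rw [← hm, qipow n dvd_rfl, one_smul, gsi, zero_smul, add_zero] at h
    exact h
  have wU : ∀ j : ℕ, n ∣ j → Commute W (U ^ j) := by
    rintro j ⟨c, rfl⟩
    rw [pow_mul]
    exact (Commute.pow_right wUn c : _)
  have wV : ∀ j : ℕ, n ∣ j → Commute W (V ^ j) := by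
    rintro j ⟨c, rfl⟩
    rw [pow_mul]
    exact (Commute.pow_right wVn c : _)
  have hC : Commute Fv W := by
    exact aeval_commute f V W fun j hj => (wV j (hf j hj)).symm
  have hD : Commute Fu W := by
    exact aeval_commute f U W fun j hj => (wU j (hf j hj)).symm
  -- w powers past u and v
  have pow_w_u : ∀ m : ℕ, W ^ (m + 1) * U =
      q ^ (m + 1) • (U * W ^ (m + 1)) + (∑ i ∈ Finset.range (m + 1), q ^ i) • (Fv * W ^ m) := by
    intro m; induction m with
    | zero => simpa using rwu'
    | succ m ih =>
      rw [pow_succ', mul_assoc, ih, mul_add, mul_smul_comm, mul_smul_comm,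
        ← mul_assoc, ← mul_assoc, rwu', ← hC.eq, Finset.sum_range_succ]
      rw [add_mul, smul_mul_assoc, mul_assoc, ← pow_succ', mul_assoc, ← pow_succ']
      simp only [Finset.sum_range_succ, add_smul, smul_add, smul_smul, pow_succ]
      module
  have pow_w_v : ∀ m : ℕ, W ^ (m + 1) * V =
      (q⁻¹) ^ (m + 1) • (V * W ^ (m + 1)) + (∑ i ∈ Finset.range (m + 1), (q⁻¹) ^ i) • (Fu * W ^ m) := by
    intro m; induction m with
    | zero => simpa using rwv'
    | succ m ih =>
      rw [pow_succ', mul_assoc, ih, mul_add, mul_smul_comm, mul_smul_comm,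
        ← mul_assoc, ← mul_assoc, rwv', ← hD.eq, Finset.sum_range_succ]
      rw [add_mul, smul_mul_assoc, mul_assoc, ← pow_succ', mul_assoc, ← pow_succ']
      simp only [Finset.sum_range_succ, add_smul, smul_add, smul_smul, pow_succ]
      module
  have WnU : Commute (W ^ n) U := by
    have h := pow_w_u m
    rw [← hm, qpow n dvd_rfl, one_smul, gs, zero_smul, add_zero] at h
    exact h
  have WnV : Commute (W ^ n) V := by
    have h := pow_w_v m
    rw [← hm, qipow n dvd_rfl, one_smul, gsi, zero_smul, add_zero] at h
    exact h
  have WnW : Commute (W ^ n) W := (Commute.refl W).pow_left n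
  -- conclude via generators
  rw [Semigroup.mem_center_iff]
  intro a
  obtain ⟨x, rfl⟩ := RingQuot.mkAlgHom_surjective k (BRel k q f) a
  induction x using FreeAlgebra.induction with
  | grade0 r =>
    rw [AlgHom.commutes]
    exact (Algebra.commute_algebraMap_left r _).eq
  | grade1 i =>
    fin_cases i
    · exact WnU.eq.symm
    · exact WnV.eq.symm
    · exact WnW.eq.symm
  | mul a b ha hb =>
    rw [map_mul, mul_assoc, hb, ← mul_assoc, ha, mul_assoc]
  | add a b ha hb =>
    rw [map_add, add_mul, mul_add, ha, hb]
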